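/- No distillation of negativity by positively represented projective measurement (bound states for magic state distillation): let m ≥ 1, with composite phase point operators B_𝐯 on m qudits defined entrywise by (B_𝐯) x y = ∏_i A_(𝐯 i) (x i) (y i). Let σ : Matrix ((ZMod d) × (Fin m → ZMod d)) ((ZMod d) × (Fin m → ZMod d)) ℂ be Hermitian with Re(trace((A_u ⊗ B_𝐯) * σ)) ≥ 0 for all u and 𝐯. Let P : Matrix (Fin m → ZMod d) (Fin m → ZMod d) ℂ be Hermitian with P * P = P and Re(trace(B_𝐯 * P)) ≥ 0 for all 𝐯. Define the (unnormalized) post-selected output state ρ_out : Matrix (ZMod d) (ZMod d) ℂ by ρ_out i j = Σ over k : Fin m → ZMod d of ((1 ⊗ P) * σ * (1 ⊗ P)) (i, k) (j, k) (the partial trace over the last m qudits). Then for every u ∈ ZMod d × ZMod d, Re(trace(A_u * ρ_out)) ≥ 0. -/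

import Mathlib

open Matrix Complex

/-- ω = exp(2πi/d). -/
noncomputable def omegaC (d : ℕ) : ℂ := Complex.exp (2 * Real.pi * Complex.I / d)

/-- The clock matrix `Z`, with `Z x x = ω ^ x.val`. -/
noncomputable def Zmat (d : ℕ) : Matrix (ZMod d) (ZMod d) ℂ :=
  Matrix.diagonal (fun x => omegaC d ^ x.val)

/-- The shift matrix `X`, with `X x y = 1` iff `x = y + 1`. -/
noncomputable def Xmat (d : ℕ) : Matrix (ZMod d) (ZMod d) ℂ :=
  Matrix.of fun x y => if x = y + 1 then 1 else 0

/-- The Heisenberg–Weyl operator `T_a`. -/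
noncomputable def TW (d : ℕ) [NeZero d] (a : ZMod d × ZMod d) : Matrix (ZMod d) (ZMod d) ℂ :=
  omegaC d ^ ((-((2 : ZMod d)⁻¹ * a.1 * a.2)).val) • (Zmat d ^ a.1.val * Xmat d ^ a.2.val)

/-- The phase point operator at the origin, `A_0 = (1/d) • ∑ a, T_a`. -/
noncomputable def Apoint0 (d : ℕ) [NeZero d] : Matrix (ZMod d) (ZMod d) ℂ :=
  (1 / (d : ℂ)) • ∑ a : ZMod d × ZMod d, TW d a

/-- The phase point operator `A_u = T_u * A_0 * T_uᴴ`. -/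
noncomputable def Apoint (d : ℕ) [NeZero d] (u : ZMod d × ZMod d) : Matrix (ZMod d) (ZMod d) ℂ :=
  TW d u * Apoint0 d * (TW d u)ᴴ

open Kronecker

/-- Composite phase point operator on `m` qudits. -/
noncomputable def Bcomp (d : ℕ) [NeZero d] (m : ℕ) (v : Fin m → ZMod d × ZMod d) :
    Matrix (Fin m → ZMod d) (Fin m → ZMod d) ℂ :=
  Matrix.of fun x y => ∏ i : Fin m, Apoint d (v i) (x i) (y i)

/-!
For odd `d` the phase point operators are explicit: `A_u x y = ω^(u₁ (x - y))` if
`x + y = 2 u₂` and `0` otherwise. Hence they are Hermitian and form a tight frame,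
`∑ u, tr (A_u Q) • A_u = d • Q`, and so do their tensor products `B_v`, with constant `d ^ m`.
Expanding `d ^ m • P = ∑ v, tr (B_v P) • B_v` and absorbing the sandwich by `P * P = P` gives
`d ^ m tr (A_u ρ_out) = ∑ v, tr (B_v P) tr ((A_u ⊗ B_v) σ)`, a sum of products of
nonnegative reals: `tr (B_v P)` is real because `B_v` and `P` are Hermitian.
-/

open ZMod (stdAddChar)

lemma ZMod.two_mul_inv_two {n : ℕ} (hodd : Odd n) : (2 : ZMod n) * 2⁻¹ = 1 := by
  apply ZMod.mul_inv_of_unit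
  exact_mod_cast (ZMod.isUnit_iff_coprime 2 n).mpr (Nat.coprime_two_left.mpr hodd)

section TightFrame

variable {ι n : Type*} [Fintype ι] [DecidableEq n]

/-- Entrywise form of `∑ i, ⟪M i, Q⟫ • M i = c • Q` for the Frobenius inner product. -/
def IsTightFrame (M : ι → Matrix n n ℂ) (c : ℂ) : Prop :=
  ∀ x y p q, ∑ i, M i x y * star (M i p q) = if x = p ∧ y = q then c else 0

theorem IsTightFrame.sum_trace_conjTranspose_mul_smul [Fintype n] {M : ι → Matrix n n ℂ} {c : ℂ}
    (hM : IsTightFrame M c) (Q : Matrix n n ℂ) : ∑ i, ((M i)ᴴ * Q).trace • M i = c • Q := by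
  ext x y
  have hpq : ∀ p q, ∑ i, star (M i p q) * Q p q * M i x y =
      if x = p then if y = q then c * Q x y else 0 else 0 := by
    intro p q
    calc ∑ i, star (M i p q) * Q p q * M i x y = Q p q * ∑ i, M i x y * star (M i p q) := by
          rw [Finset.mul_sum]
          exact Finset.sum_congr rfl fun i _ => by ring
      _ = _ := by
          rw [hM]
          split_ifs <;> simp_all [mul_comm]
  simp only [Matrix.sum_apply, Matrix.smul_apply, smul_eq_mul, Matrix.trace, Matrix.diag,
    Matrix.mul_apply, Matrix.conjTranspose_apply, Finset.sum_mul]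
  rw [Finset.sum_comm]
  refine (Finset.sum_congr rfl fun q _ => Finset.sum_comm).trans ?_
  simp only [hpq, Finset.sum_ite_eq, Finset.mem_univ, if_true]

theorem IsTightFrame.pi {κ : Type*} [Fintype κ] [DecidableEq κ] {A : ι → Matrix n n ℂ} {c : ℂ}
    (hA : IsTightFrame A c) :
    IsTightFrame (fun v : κ → ι => Matrix.of fun x y : κ → n => ∏ k, A (v k) (x k) (y k))
      (c ^ Fintype.card κ) := by
  intro x y p q
  simp only [Matrix.of_apply, star_prod, ← Finset.prod_mul_distrib]
  rw [← Fintype.prod_sum fun k u => A u (x k) (y k) * star (A u (p k) (q k))]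
  simp only [hA _ _ _ _, Fintype.prod_ite_zero, Finset.prod_const, Finset.card_univ, funext_iff,
    forall_and]

end TightFrame

section Kronecker

variable {R n k : Type*} [CommSemiring R] [Fintype n] [Fintype k]

theorem trace_mul_partialTrace [DecidableEq k] (A : Matrix n n R)
    (M : Matrix (n × k) (n × k) R) :
    (A * Matrix.of fun i j => ∑ l, M (i, l) (j, l)).trace =
      ((A ⊗ₖ (1 : Matrix k k R)) * M).trace := by
  simp only [Matrix.trace, Matrix.diag, Matrix.mul_apply, Matrix.of_apply,
    Matrix.kroneckerMap_apply, Matrix.one_apply]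
  rw [Fintype.sum_prod_type]
  simp_rw [Fintype.sum_prod_type]
  simp only [mul_ite, ite_mul, mul_one, mul_zero, zero_mul, Finset.sum_ite_eq, Finset.mem_univ,
    if_true, Finset.mul_sum]
  exact Finset.sum_congr rfl fun i _ => Finset.sum_comm

theorem trace_kronecker_one_mul_sandwich [DecidableEq n] [DecidableEq k] (A : Matrix n n R)
    (P : Matrix k k R) (σ : Matrix (n × k) (n × k) R) :
    ((A ⊗ₖ (1 : Matrix k k R)) * ((1 ⊗ₖ P) * σ * (1 ⊗ₖ P))).trace =
      ((A ⊗ₖ (P * P)) * σ).trace := by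
  rw [← Matrix.mul_assoc, ← Matrix.mul_assoc, ← Matrix.mul_kronecker_mul, Matrix.mul_one,
    Matrix.one_mul, Matrix.trace_mul_comm, ← Matrix.mul_assoc, ← Matrix.mul_kronecker_mul,
    Matrix.one_mul]

theorem trace_kronecker_sum_smul_mul {ι : Type*} [Fintype ι] (A : Matrix n n R) (c : ι → R)
    (M : ι → Matrix k k R) (σ : Matrix (n × k) (n × k) R) :
    ((A ⊗ₖ ∑ i, c i • M i) * σ).trace = ∑ i, c i * ((A ⊗ₖ M i) * σ).trace := by
  have hlin : A ⊗ₖ ∑ i, c i • M i = ∑ i, c i • (A ⊗ₖ M i) := by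
    ext ⟨a, b⟩ ⟨a', b'⟩
    simp [Matrix.sum_apply, Finset.mul_sum, mul_left_comm]
  simp only [hlin, Matrix.sum_mul, Matrix.trace_sum, Matrix.smul_mul, Matrix.trace_smul,
    smul_eq_mul]

end Kronecker

theorem Matrix.IsHermitian.trace_mul_im_eq_zero {n : Type*} [Fintype n] {A B : Matrix n n ℂ}
    (hA : A.IsHermitian) (hB : B.IsHermitian) : (A * B).trace.im = 0 := by
  rw [← Complex.conj_eq_iff_im, ← RCLike.star_def, ← Matrix.trace_conjTranspose,
    Matrix.conjTranspose_mul, hA.eq, hB.eq, Matrix.trace_mul_comm]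

section PhasePoint

variable {d : ℕ} [NeZero d]

lemma omegaC_pow_val (c : ZMod d) : omegaC d ^ c.val = stdAddChar c := by
  rw [omegaC, ← Complex.exp_nat_mul, ZMod.stdAddChar_apply, ZMod.toCircle_apply]
  ring_nf

lemma conj_stdAddChar (c : ZMod d) : starRingEnd ℂ (stdAddChar c) = stdAddChar (-c) := by
  rw [AddChar.starComp_apply (by simp [ZMod.ringChar_zmod_n, Nat.pos_of_neZero]),
    AddChar.inv_apply]

lemma sum_stdAddChar_mul (b : ZMod d) :
    ∑ x : ZMod d, stdAddChar (x * b) = if b = 0 then (d : ℂ) else 0 := by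
  simp [AddChar.sum_mulShift b (ZMod.isPrimitive_stdAddChar d)]


lemma Xmat_pow_apply (n : ℕ) (x y : ZMod d) :
    (Xmat d ^ n) x y = if x = y + n then 1 else 0 := by
  induction n generalizing y with
  | zero => simp [Matrix.one_apply]
  | succ n ih =>
    rw [pow_succ, Matrix.mul_apply, Finset.sum_eq_single (y + 1)]
    · rw [ih]
      simp [Xmat, add_assoc, add_comm (1 : ZMod d)]
    · intro z _ hz
      simp [Xmat, hz]
    · simp

lemma TW_apply (a : ZMod d × ZMod d) (x y : ZMod d) :
    TW d a x y = stdAddChar (a.1 * x - 2⁻¹ * a.1 * a.2) * if x = y + a.2 then 1 else 0 := by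
  simp only [TW, Zmat, Matrix.smul_apply, Matrix.diagonal_pow, Matrix.diagonal_mul,
    Xmat_pow_apply, ZMod.natCast_zmod_val, Pi.pow_apply, omegaC_pow_val, smul_eq_mul,
    ← AddChar.map_nsmul_eq_pow, nsmul_eq_mul, ← mul_assoc, ← AddChar.map_add_eq_mul]
  ring_nf


lemma Apoint0_apply (hodd : Odd d) (x y : ZMod d) :
    Apoint0 d x y = if x + y = 0 then 1 else 0 := by
  have h2 := ZMod.two_mul_inv_two hodd
  have hinner : ∀ a₁ : ZMod d,
      ∑ a₂ : ZMod d, TW d (a₁, a₂) x y = stdAddChar (a₁ * (2⁻¹ * (x + y))) := by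
    intro a₁
    simp only [TW_apply, mul_ite, mul_one, mul_zero, ← sub_eq_iff_eq_add', eq_comm (a := x - y),
      Finset.sum_ite_eq', Finset.mem_univ, if_true]
    congr 1
    linear_combination (-a₁ * x) * h2
  have hunit : (2⁻¹ : ZMod d) * (x + y) = 0 ↔ x + y = 0 := by
    constructor
    · intro h; linear_combination 2 * h - (x + y) * h2
    · intro h; rw [h, mul_zero]
  rw [Apoint0, Matrix.smul_apply, Matrix.sum_apply, Fintype.sum_prod_type]
  simp only [hinner, sum_stdAddChar_mul, hunit, smul_eq_mul]
  split_ifs <;> simp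

lemma Apoint_apply (hodd : Odd d) (u : ZMod d × ZMod d) (x y : ZMod d) :
    Apoint d u x y = stdAddChar (u.1 * (x - y)) * if x + y = 2 * u.2 then 1 else 0 := by
  have hleft : ∀ t, (TW d u * Apoint0 d) x t =
      stdAddChar (u.1 * x - 2⁻¹ * u.1 * u.2) * if x + t = u.2 then 1 else 0 := by
    intro t
    rw [Matrix.mul_apply, Finset.sum_eq_single (x - u.2)]
    · simp [TW_apply, Apoint0_apply hodd, sub_add_eq_add_sub, sub_eq_zero]
    · intro s _ hs
      simp [TW_apply, ← sub_eq_iff_eq_add, Ne.symm hs]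
    · simp
  rw [Apoint, Matrix.mul_apply, Finset.sum_eq_single (u.2 - x)]
  · have hcond : y = u.2 - x + u.2 ↔ x + y = 2 * u.2 := by
      constructor <;> intro h <;> linear_combination h
    simp only [hleft, TW_apply, Matrix.conjTranspose_apply, add_sub_cancel, if_true, mul_one,
      hcond]
    split_ifs
    · rw [RCLike.star_def, mul_one, conj_stdAddChar, ← AddChar.map_add_eq_mul]
      ring_nf
    · simp
  · intro t _ ht
    simp [hleft, ← eq_sub_iff_add_eq', ht]
  · simp

lemma Apoint_isHermitian (hodd : Odd d) (u : ZMod d × ZMod d) : (Apoint d u).IsHermitian := by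
  ext x y
  rw [Matrix.conjTranspose_apply, Apoint_apply hodd, Apoint_apply hodd, add_comm y]
  split_ifs
  · rw [RCLike.star_def, mul_one, mul_one, conj_stdAddChar, ← mul_neg, neg_sub]
  · simp

lemma isTightFrame_Apoint (hodd : Odd d) : IsTightFrame (Apoint d) d := by
  intro x y p q
  have h2 := ZMod.two_mul_inv_two hodd
  have hterm : ∀ u : ZMod d × ZMod d, Apoint d u x y * star (Apoint d u p q) =
      stdAddChar (u.1 * (x - y - (p - q))) *
        ((if u.2 = 2⁻¹ * (x + y) then 1 else 0) * (if p + q = 2 * u.2 then 1 else 0)) := by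
    intro u
    have hhalf : x + y = 2 * u.2 ↔ u.2 = 2⁻¹ * (x + y) := by
      constructor <;> intro h
      · linear_combination -2⁻¹ * h - u.2 * h2
      · linear_combination -2 * h - (x + y) * h2
    have hchar : stdAddChar (u.1 * (x - y)) * star (stdAddChar (u.1 * (p - q))) =
        stdAddChar (u.1 * (x - y - (p - q))) := by
      rw [RCLike.star_def, conj_stdAddChar, ← AddChar.map_add_eq_mul]
      ring_nf
    simp only [Apoint_apply hodd, hhalf, ← hchar]
    split_ifs <;> simp
  have hsolve : x - y - (p - q) = 0 ∧ p + q = x + y ↔ x = p ∧ y = q := by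
    constructor
    · rintro ⟨hdiff, hsum⟩
      constructor
      · linear_combination 2⁻¹ * (hdiff - hsum) - (x - p) * h2
      · linear_combination -2⁻¹ * (hdiff + hsum) - (y - q) * h2
    · rintro ⟨rfl, rfl⟩
      simp
  have hsplit : ∑ u : ZMod d × ZMod d, Apoint d u x y * star (Apoint d u p q) =
      (∑ a : ZMod d, stdAddChar (a * (x - y - (p - q)))) *
        ∑ b : ZMod d, (if b = 2⁻¹ * (x + y) then 1 else 0) * (if p + q = 2 * b then 1 else 0) := by
    simp only [hterm, Finset.sum_mul_sum, Fintype.sum_prod_type]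
  rw [hsplit, sum_stdAddChar_mul]
  simp only [ite_mul, one_mul, zero_mul, Finset.sum_ite_eq', Finset.mem_univ, if_true,
    ← mul_assoc, h2]
  simp only [mul_ite, mul_one, mul_zero, ← ite_and, hsolve]

lemma Bcomp_isHermitian (hodd : Odd d) (m : ℕ) (v : Fin m → ZMod d × ZMod d) :
    (Bcomp d m v).IsHermitian := by
  ext x y
  simp only [Matrix.conjTranspose_apply, Bcomp, Matrix.of_apply, star_prod,
    (Apoint_isHermitian hodd _).apply]

lemma isTightFrame_Bcomp (hodd : Odd d) (m : ℕ) : IsTightFrame (Bcomp d m) ((d : ℂ) ^ m) := by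
  have h := (isTightFrame_Apoint hodd).pi (κ := Fin m)
  rwa [Fintype.card_fin] at h

end PhasePoint



theorem no_distillation_of_negativity_general (d : ℕ) [NeZero d]
    (hodd : Odd d) (m : ℕ)
    (σ : Matrix (ZMod d × (Fin m → ZMod d)) (ZMod d × (Fin m → ZMod d)) ℂ)
    (hσpos : ∀ (u : ZMod d × ZMod d) (v : Fin m → ZMod d × ZMod d),
        0 ≤ (((Apoint d u ⊗ₖ Bcomp d m v) * σ).trace).re)
    (P : Matrix (Fin m → ZMod d) (Fin m → ZMod d) ℂ) (hPH : Pᴴ = P) (hPP : P * P = P)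
    (hPpos : ∀ v : Fin m → ZMod d × ZMod d, 0 ≤ ((Bcomp d m v * P).trace).re)
    (ρout : Matrix (ZMod d) (ZMod d) ℂ)
    (hρout : ρout = Matrix.of fun i j =>
        ∑ k : Fin m → ZMod d,
          (((1 : Matrix (ZMod d) (ZMod d) ℂ) ⊗ₖ P) * σ *
            ((1 : Matrix (ZMod d) (ZMod d) ℂ) ⊗ₖ P)) (i, k) (j, k))
    (u : ZMod d × ZMod d) :
    0 ≤ ((Apoint d u * ρout).trace).re := by
  have hexpand : ∑ v, (Bcomp d m v * P).trace • Bcomp d m v = (d : ℂ) ^ m • P := by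
    simpa only [(Bcomp_isHermitian hodd m _).eq] using
      (isTightFrame_Bcomp hodd m).sum_trace_conjTranspose_mul_smul P
  have hkey : (d : ℂ) ^ m * (Apoint d u * ρout).trace =
      ∑ v, (Bcomp d m v * P).trace * ((Apoint d u ⊗ₖ Bcomp d m v) * σ).trace := by
    rw [hρout, trace_mul_partialTrace, trace_kronecker_one_mul_sandwich, hPP,
      ← smul_eq_mul, ← Matrix.trace_smul, ← Matrix.smul_mul, ← Matrix.kronecker_smul, ← hexpand,
      trace_kronecker_sum_smul_mul]
  have hsum : 0 ≤ ((d : ℂ) ^ m * (Apoint d u * ρout).trace).re := by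
    rw [hkey, Complex.re_sum]
    refine Finset.sum_nonneg fun v _ => ?_
    rw [Complex.mul_re, (Bcomp_isHermitian hodd m v).trace_mul_im_eq_zero hPH,
      zero_mul, sub_zero]
    exact mul_nonneg (hPpos v) (hσpos u v)
  have hd : (0 : ℝ) < (d : ℝ) ^ m := pow_pos (Nat.cast_pos.mpr (NeZero.pos d)) m
  rw [← Nat.cast_pow, ← Complex.ofReal_natCast, Complex.re_ofReal_mul, Nat.cast_pow] at hsum
  exact nonneg_of_mul_nonneg_right hsum hd

/-- No distillation of negativity by a positively represented projective measurement. -/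
theorem no_distillation_of_negativity (d : ℕ) [NeZero d]
    (hodd : Odd d) (hd : 1 < d) (m : ℕ) (hm : 1 ≤ m)
    (σ : Matrix (ZMod d × (Fin m → ZMod d)) (ZMod d × (Fin m → ZMod d)) ℂ)
    (hσH : σᴴ = σ)
    (hσpos : ∀ (u : ZMod d × ZMod d) (v : Fin m → ZMod d × ZMod d),
        0 ≤ (((Apoint d u ⊗ₖ Bcomp d m v) * σ).trace).re)
    (P : Matrix (Fin m → ZMod d) (Fin m → ZMod d) ℂ) (hPH : Pᴴ = P) (hPP : P * P = P)
    (hPpos : ∀ v : Fin m → ZMod d × ZMod d, 0 ≤ ((Bcomp d m v * P).trace).re)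
    (ρout : Matrix (ZMod d) (ZMod d) ℂ)
    (hρout : ρout = Matrix.of fun i j =>
        ∑ k : Fin m → ZMod d,
          (((1 : Matrix (ZMod d) (ZMod d) ℂ) ⊗ₖ P) * σ *
            ((1 : Matrix (ZMod d) (ZMod d) ℂ) ⊗ₖ P)) (i, k) (j, k))
    (u : ZMod d × ZMod d) :
    0 ≤ ((Apoint d u * ρout).trace).re :=
  no_distillation_of_negativity_general d hodd m σ hσpos P hPH hPP hPpos ρout hρout u
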